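/- Fix ε > 0, an integer k ≥ 1, an admissible disutility function h, a real ζ with 0 < ζ < ε, and λ̂ with 0 < λ̂ ≤ ((ε − ζ)/(ε + ζ))·f̂(ε + ζ, k). Set δ(r) = (ζ/2)·e^{−ζ|r|} and λ(r) = λ̂·δ(r). For every v ∈ ℝ^k, the unique continuously differentiable solution ν of ν′(r) = (min_{1≤i≤k} h(|r − v_i|))·δ(r) − λ(r) − ε·|ν(r)|, ν(v_med) = 0 (with v_med = Median(v)), satisfies: there exist U, L ∈ ℝ with ν(r) ≥ 0 for all r ≥ U and ν(r) ≤ 0 for all r ≤ L. -/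

import Mathlib

open MeasureTheory Real Filter Set Topology

noncomputable section

/-- An admissible disutility function: continuous and increasing on `[0,∞)`,
vanishing at `0`, with `log ∘ h` Lipschitz on some `[B,∞)`, `B > 0`. -/
structure Admissible (h : ℝ → ℝ) : Prop where
  cont : ContinuousOn h (Set.Ici 0)
  mono : StrictMonoOn h (Set.Ici 0)
  nonneg : ∀ x, 0 ≤ x → 0 ≤ h x
  zero : h 0 = 0
  logLip : ∃ B : ℝ, 0 < B ∧ ∃ K : NNReal,
    LipschitzOnWith K (fun x => Real.log (h x)) (Set.Ici B)

/-- `f̂(ε,k)`. -/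
def fhat (ε : ℝ) (k : ℕ) (h : ℝ → ℝ) : ℝ :=
  ⨅ b : Fin k → ℝ,
    ∫ y : ℝ, (⨅ i, h (|y - b i|)) * ((ε / 2) * Real.exp (-(ε * |y|)))

/-- The median of the multiset of coordinates of `q : Fin k → ℝ`. -/
def median {k : ℕ} (q : Fin k → ℝ) : ℝ :=
  let l := Multiset.sort (↑(List.ofFn q) : Multiset ℝ) (· ≤ ·)
  if k % 2 = 1 then l.getD ((k - 1) / 2) 0
  else (l.getD (k / 2 - 1) 0 + l.getD (k / 2) 0) / 2

/-- `ν` is a (continuously differentiable) solution of the initial value problem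
`ν′(r) = (min_i h |r − v_i|)·δ(r) − λ(r) − ε·|ν(r)|`, `ν(Median v) = 0`,
where `δ(r) = (ζ/2)·e^{−ζ|r|}` and `λ(r) = λ̂·δ(r)`. -/
def IsSolution (ε ζ lamhat : ℝ) (h : ℝ → ℝ) {k : ℕ} (v : Fin k → ℝ)
    (ν : ℝ → ℝ) : Prop :=
  ν (median v) = 0 ∧
  ∀ r : ℝ, HasDerivAt ν
    ((⨅ i, h (|r - v i|)) * ((ζ / 2) * Real.exp (-(ζ * |r|)))
      - lamhat * ((ζ / 2) * Real.exp (-(ζ * |r|)))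
      - ε * |ν r|) r

private lemma sorted_split {l : List ℝ} (hl : l.Pairwise (· ≤ ·)) (a : ℝ) :
    ∃ l₁ l₂ : List ℝ, l = l₁ ++ l₂ ∧ (∀ x ∈ l₁, x ≤ a) ∧ (∀ x ∈ l₂, a < x) := by
  induction l with
  | nil => exact ⟨[], [], rfl, by simp, by simp⟩
  | cons x xs ih =>
    rcases List.pairwise_cons.1 hl with ⟨hx, hxs⟩
    by_cases hxa : x ≤ a
    · obtain ⟨l₁, l₂, he, h1, h2⟩ := ih hxs
      refine ⟨x :: l₁, l₂, by rw [he]; rfl, ?_, h2⟩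
      intro y hy
      rcases List.mem_cons.1 hy with rfl | hy
      exacts [hxa, h1 y hy]
    · push_neg at hxa
      refine ⟨[], x :: xs, rfl, by simp, ?_⟩
      intro y hy
      rcases List.mem_cons.1 hy with rfl | hy
      exacts [hxa, lt_of_lt_of_le hxa (hx y hy)]

private lemma sorted_le_getD_last {L : List ℝ} (hL : L.Pairwise (· ≤ ·)) {x : ℝ} (hx : x ∈ L) :
    x ≤ L.getD (L.length - 1) 0 := by
  obtain ⟨i, hi⟩ := List.mem_iff_get.1 hx
  have h1 : L.length - 1 < L.length := by
    have := i.isLt; omega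
  rw [List.getD_eq_getElem _ _ h1, ← hi]
  exact hL.rel_get_of_le (by simp [Fin.le_def]; omega)

private lemma median_config {k : ℕ} (hk : 1 ≤ k) (h : ℝ → ℝ) (hh : Admissible h)
    (v : Fin k → ℝ) {a : ℝ} (ha : median v ≤ a) :
    ∃ b : Fin k → ℝ, ∀ y : ℝ,
      (⨅ i, h (|y - b i|)) ≤ ⨅ j, h (|a + |y| - v j|) := by
  haveI : Nonempty (Fin k) := ⟨⟨0, hk⟩⟩
  have hmono : ∀ {x y : ℝ}, 0 ≤ x → x ≤ y → h x ≤ h y := by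
    intro x y hx hxy
    exact hh.mono.monotoneOn hx (le_trans hx hxy) hxy
  set l := Multiset.sort (↑(List.ofFn v) : Multiset ℝ) (· ≤ ·) with hldef
  have hsort : l.Pairwise (· ≤ ·) := Multiset.pairwise_sort _ _
  have hperm : List.Perm l (List.ofFn v) := Multiset.coe_eq_coe.1 (Multiset.sort_eq _ _)
  have hlen : l.length = k := by rw [hperm.length_eq, List.length_ofFn]
  have hmem : ∀ x : ℝ, x ∈ l ↔ ∃ i, v i = x := by
    intro x; rw [hperm.mem_iff, List.mem_ofFn]
  obtain ⟨l₁, l₂, hsplit, hle, hgt⟩ := sorted_split hsort a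
  set nn := l₁.length with hnn
  set np := l₂.length with hnp
  have hnnp : nn + np = k := by rw [hnn, hnp, ← List.length_append, ← hsplit, hlen]
  -- getD facts
  have hgetlow : ∀ i, i < nn → l.getD i 0 ≤ a := by
    intro i hi
    rw [hsplit, List.getD_append _ _ _ _ hi]
    refine hle _ ?_
    rw [List.getD_eq_getElem _ _ hi]
    exact List.getElem_mem _
  have hgethigh : ∀ i, nn ≤ i → i < k → a < l.getD i 0 := by
    intro i hi hik
    rw [hsplit, List.getD_append_right _ _ _ _ hi]
    refine hgt _ ?_
    have h2 : i - nn < np := by omega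
    rw [List.getD_eq_getElem _ _ h2]
    exact List.getElem_mem _
  have hmeda := ha
  rw [median] at hmeda
  simp only [← hldef] at hmeda
  -- C1 : 2 * np ≤ k
  have C1 : 2 * np ≤ k := by
    by_contra hc
    push_neg at hc
    rcases Nat.even_or_odd k with hke | hko
    · have hk2 : k % 2 = 0 := Nat.even_iff.1 hke
      rw [if_neg (by omega)] at hmeda
      have h1 : a < l.getD (k / 2 - 1) 0 := hgethigh _ (by omega) (by omega)
      have h2 : a < l.getD (k / 2) 0 := hgethigh _ (by omega) (by omega)
      linarith
    · have hk2 : k % 2 = 1 := Nat.odd_iff.1 hko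
      rw [if_pos hk2] at hmeda
      have h1 : a < l.getD ((k - 1) / 2) 0 := hgethigh _ (by omega) (by omega)
      linarith
  -- the tight case bound
  have C2 : 2 * np = k → ∀ x ∈ l₁, l.getD nn 0 - a ≤ a - x := by
    intro h2np x hx
    have hk2 : k % 2 = 0 := by omega
    have hnneq : nn = k / 2 := by omega
    rw [if_neg (by omega)] at hmeda
    have hxle : x ≤ l₁.getD (nn - 1) 0 := by
      have hs1 : l₁.Pairwise (· ≤ ·) := by
        refine List.Pairwise.sublist ?_ (hsplit ▸ hsort)
        exact List.sublist_append_left l₁ l₂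
      have := sorted_le_getD_last hs1 hx
      rwa [← hnn] at this
    have hxeq : l.getD (nn - 1) 0 = l₁.getD (nn - 1) 0 := by
      rw [hsplit, List.getD_append _ _ _ _ (by omega)]
    have hgoal : l.getD (nn - 1) 0 + l.getD nn 0 ≤ 2 * a := by
      have : nn - 1 = k / 2 - 1 := by omega
      rw [this, hnneq]; linarith
    rw [hxeq] at hgoal
    linarith
  -- construction
  set Lp := l₂.map (fun x => x - a) with hLp
  set L := Lp ++ Lp.map (fun x => -x) ++ List.replicate (k - 2 * np) 0 with hLdef
  have hLplen : Lp.length = np := by simp [hLp, hnp]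
  have hLlen : L.length = k := by
    simp only [hLdef, List.length_append, List.length_map, List.length_replicate, hLplen]
    omega
  have hLp_pos : ∀ x ∈ Lp, 0 < x := by
    intro x hx
    obtain ⟨z, hz, rfl⟩ := List.mem_map.1 hx
    have := hgt z hz
    linarith
  have hLneg : ∀ x ∈ L, -x ∈ L := by
    intro x hx
    rcases List.mem_append.1 hx with hx' | hx'
    · rcases List.mem_append.1 hx' with hx'' | hx''
      · exact List.mem_append_left _ (List.mem_append_right _ (List.mem_map_of_mem hx''))
      · obtain ⟨z, hz, rfl⟩ := List.mem_map.1 hx''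
        rw [neg_neg]
        exact List.mem_append_left _ (List.mem_append_left _ hz)
    · have := (List.mem_replicate.1 hx').2
      subst this
      simpa using hx
  have hcover : ∀ u : ℝ, 0 ≤ u → ∀ j : Fin k, ∃ x ∈ L, |u - x| ≤ |a + u - v j| := by
    intro u hu j
    by_cases hvj : a < v j
    · refine ⟨v j - a, ?_, ?_⟩
      · have hvl : v j ∈ l := (hmem _).2 ⟨j, rfl⟩
        have hvl2 : v j ∈ l₂ := by
          rw [hsplit] at hvl
          rcases List.mem_append.1 hvl with hc | hc
          · exact absurd (hle _ hc) (by linarith)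
          · exact hc
        exact List.mem_append_left _ (List.mem_append_left _ (List.mem_map_of_mem hvl2))
      · have : u - (v j - a) = a + u - v j := by ring
        rw [this]
    · push_neg at hvj
      have habs : |a + u - v j| = u + (a - v j) := by
        rw [abs_of_nonneg (by linarith)]; ring
      by_cases hpad : 2 * np < k
      · refine ⟨0, ?_, ?_⟩
        · exact List.mem_append_right _ (List.mem_replicate.2 ⟨by omega, rfl⟩)
        · rw [habs, sub_zero, abs_of_nonneg hu]; linarith
      · have h2np : 2 * np = k := by omega
        set q := l₂.getD 0 0 with hq
        have hnp1 : 1 ≤ np := by omega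
        have hql2 : q ∈ l₂ := by
          rw [hq, List.getD_eq_getElem _ _ (by omega)]
          exact List.getElem_mem _
        have hqa : a < q := hgt _ hql2
        have hqgetD : l.getD nn 0 = q := by
          rw [hsplit, List.getD_append_right _ _ _ _ le_rfl]
          simp [hq]
        have hvl1 : v j ∈ l₁ := by
          have hvl : v j ∈ l := (hmem _).2 ⟨j, rfl⟩
          rw [hsplit] at hvl
          rcases List.mem_append.1 hvl with hc | hc
          · exact hc
          · exact absurd (hgt _ hc) (by linarith)
        have hkey : q - a ≤ a - v j := by
          have := C2 h2np (v j) hvl1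
          rwa [hqgetD] at this
        refine ⟨q - a, ?_, ?_⟩
        · exact List.mem_append_left _
            (List.mem_append_left _ (List.mem_map_of_mem hql2))
        · rw [habs]
          have h1 : 0 ≤ q - a := by linarith
          refine abs_le.2 ⟨by linarith, by linarith⟩
  -- define b
  refine ⟨fun i => L.get (Fin.cast hLlen.symm i), ?_⟩
  have hbmem : ∀ i : Fin k, L.get (Fin.cast hLlen.symm i) ∈ L := fun i => List.getElem_mem _
  have hmemb : ∀ x ∈ L, ∃ i : Fin k, L.get (Fin.cast hLlen.symm i) = x := by
    intro x hx
    obtain ⟨n, hn⟩ := List.mem_iff_get.1 hx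
    refine ⟨Fin.cast hLlen n, ?_⟩
    rw [← hn]
    rfl
  intro y
  have hbdd : BddBelow (Set.range fun i : Fin k => h (|y - L.get (Fin.cast hLlen.symm i)|)) :=
    (Set.finite_range _).bddBelow
  refine le_ciInf fun j => ?_
  obtain ⟨x, hxL, hx⟩ := hcover |y| (abs_nonneg _) j
  rcases le_or_gt 0 y with hy | hy
  · obtain ⟨i, hi⟩ := hmemb x hxL
    refine le_trans (ciInf_le hbdd i) (hmono (abs_nonneg _) ?_)
    rw [hi]
    rwa [abs_of_nonneg hy] at hx ⊢
  · obtain ⟨i, hi⟩ := hmemb (-x) (hLneg x hxL)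
    refine le_trans (ciInf_le hbdd i) (hmono (abs_nonneg _) ?_)
    rw [abs_of_neg hy] at hx
    rw [hi, sub_neg_eq_add]
    have h1 : |y + x| = |(-y) - x| := by rw [← abs_neg]; congr 1; ring
    rw [h1, abs_of_neg hy]
    exact hx

private lemma median_neg {k : ℕ} (hk : 1 ≤ k) (v : Fin k → ℝ) :
    median (fun i => -v i) = -median v := by
  set l := Multiset.sort (↑(List.ofFn v) : Multiset ℝ) (· ≤ ·) with hldef
  have hsort : l.Pairwise (· ≤ ·) := Multiset.pairwise_sort _ _
  have hperm : List.Perm l (List.ofFn v) := Multiset.coe_eq_coe.1 (Multiset.sort_eq _ _)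
  have hlen : l.length = k := by rw [hperm.length_eq, List.length_ofFn]
  set l' := Multiset.sort (↑(List.ofFn fun i => -v i) : Multiset ℝ) (· ≤ ·) with hl'def
  have hsort' : l'.Pairwise (· ≤ ·) := Multiset.pairwise_sort _ _
  have hperm' : List.Perm l' (List.ofFn (fun i => -v i)) := Multiset.coe_eq_coe.1 (Multiset.sort_eq _ _)
  have hofn : List.ofFn (fun i : Fin k => -v i) = (List.ofFn v).map (fun x => -x) := by
    rw [List.map_ofFn]; rfl
  have hperm2 : List.Perm l' ((l.map (fun x => -x)).reverse) := by
    refine hperm'.trans ?_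
    rw [hofn]
    exact ((hperm.map _).symm.trans (l.map (fun x => -x)).reverse_perm.symm)
  have hsorted2 : ((l.map (fun x => -x)).reverse).Pairwise (· ≤ ·) := by
    rw [List.pairwise_reverse, List.pairwise_map]
    exact hsort.imp (fun hab => neg_le_neg hab)
  have hleq : l' = (l.map (fun x => -x)).reverse :=
    List.Perm.eq_of_pairwise' hsort' hsorted2 hperm2
  have hlen2 : ((l.map (fun x => -x)).reverse).length = k := by
    simp [hlen]
  have hgetD : ∀ i, i < k → ((l.map (fun x => -x)).reverse).getD i 0 = -(l.getD (k - 1 - i) 0) := by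
    intro i hi
    rw [List.getD_eq_getElem _ _ (by omega : i < ((l.map (fun x => -x)).reverse).length)]
    rw [List.getD_eq_getElem _ _ (by omega : k - 1 - i < l.length)]
    rw [List.getElem_reverse]
    simp only [List.get_eq_getElem, List.getElem_map]
    congr 2
    all_goals first
      | omega
      | (simp [hlen]; omega)
      | simp [hlen]
  rw [median, median]
  simp only [← hldef, ← hl'def, hleq]
  rcases Nat.even_or_odd k with hke | hko
  · have hk2 : k % 2 = 0 := Nat.even_iff.1 hke
    rw [if_neg (by omega), if_neg (by omega)]
    rw [hgetD _ (by omega), hgetD _ (by omega)]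
    have e1 : k - 1 - (k / 2 - 1) = k / 2 := by omega
    have e2 : k - 1 - k / 2 = k / 2 - 1 := by omega
    rw [e1, e2]
    ring
  · have hk2 : k % 2 = 1 := Nat.odd_iff.1 hko
    rw [if_pos hk2, if_pos hk2]
    rw [hgetD _ (by omega), show k - 1 - (k - 1) / 2 = (k - 1) / 2 from by omega]

private lemma abs_add_self_mono {x s : ℝ} (hxs : x ≤ s) : |x| + x ≤ |s| + s := by
  rcases abs_cases x with ⟨h1, h2⟩ | ⟨h1, h2⟩ <;> rcases abs_cases s with ⟨h3, h4⟩ | ⟨h3, h4⟩ <;>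
    linarith

private def wf (ε ζ : ℝ) (s : ℝ) : ℝ := ζ / 2 * Real.exp (-(ζ * |s|)) * Real.exp (-(ε * s))

private lemma wf_pos {ε ζ : ℝ} (hζ : 0 < ζ) (s : ℝ) : 0 < wf ε ζ s := by
  unfold wf; positivity

private lemma wf_eq (ε ζ s : ℝ) : wf ε ζ s = ζ / 2 * Real.exp (-(ζ * |s|) + -(ε * s)) := by
  rw [wf, mul_assoc, ← Real.exp_add]

private lemma wf_est {ε ζ : ℝ} (hζ : 0 < ζ) {x s : ℝ} (hxs : x ≤ s) :
    wf ε ζ s ≤ wf ε ζ x * Real.exp (-((ε - ζ) * (s - x))) := by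
  rw [wf_eq, wf_eq, mul_assoc, ← Real.exp_add]
  refine mul_le_mul_of_nonneg_left (Real.exp_le_exp.2 ?_) (by positivity)
  have h1 := abs_add_self_mono hxs
  have h2 : ζ * (|x| + x) ≤ ζ * (|s| + s) := mul_le_mul_of_nonneg_left h1 hζ.le
  ring_nf
  ring_nf at h2
  linarith

private lemma wf_lower {ε ζ : ℝ} (hζ : 0 < ζ) {a t : ℝ} (ht : 0 ≤ t) :
    wf ε ζ a * Real.exp (-((ε + ζ) * t)) ≤ wf ε ζ (a + t) := by
  rw [wf_eq, wf_eq, mul_assoc, ← Real.exp_add]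
  refine mul_le_mul_of_nonneg_left (Real.exp_le_exp.2 ?_) (by positivity)
  have h1 : |a + t| ≤ |a| + t := by
    calc |a + t| ≤ |a| + |t| := abs_add_le _ _
    _ = |a| + t := by rw [abs_of_nonneg ht]
  have h2 : ζ * |a + t| ≤ ζ * (|a| + t) := mul_le_mul_of_nonneg_left h1 hζ.le
  ring_nf
  ring_nf at h2
  linarith

private lemma exp_neg_int (a : ℝ) {β : ℝ} (hβ : 0 < β) :
    IntegrableOn (fun s : ℝ => Real.exp (-(β * s))) (Ioi a) := by
  simpa [neg_mul] using exp_neg_integrableOn_Ioi a hβ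

private lemma exp_neg_intval (a : ℝ) {β : ℝ} (hβ : 0 < β) :
    ∫ s in Ioi a, Real.exp (-(β * s)) = Real.exp (-(β * a)) / β := by
  have hd : ∀ x ∈ Ici a, HasDerivAt (fun s => -Real.exp (-(β * s)) / β)
      (Real.exp (-(β * x))) x := by
    intro x _
    have h1 : HasDerivAt (fun s : ℝ => -(β * s)) (-β) x := by
      have := ((hasDerivAt_id x).const_mul β).neg; simp only [mul_one] at this; exact this
    have h2 := (h1.exp.neg.div_const β)
    refine h2.congr_deriv ?_
    field_simp
  have htop : Tendsto (fun s : ℝ => -Real.exp (-(β * s)) / β) atTop (𝓝 (-0 / β)) := by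
    refine Tendsto.div_const (Tendsto.neg ?_) _
    have h3 : Tendsto (fun s : ℝ => β * s) atTop atTop :=
      Tendsto.const_mul_atTop hβ tendsto_id
    simpa [Function.comp_def] using tendsto_exp_atBot.comp (tendsto_neg_atBot_iff.2 h3)
  have := integral_Ioi_of_hasDerivAt_of_tendsto' hd (exp_neg_int a hβ) (by simpa using htop)
  rw [this]
  ring

private lemma integrable_comp_abs' {f : ℝ → ℝ} (hc : Continuous fun x : ℝ => f |x|)
    (hf : IntegrableOn f (Ioi (0 : ℝ))) : Integrable fun x : ℝ => f |x| := by
  have h1 : IntegrableOn (fun x : ℝ => f |x|) (Ioi 0) := by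
    refine hf.congr_fun (fun x hx => ?_) measurableSet_Ioi
    rw [abs_of_pos hx]
  have h2 : IntegrableOn (fun x : ℝ => f |x|) (Iic 0) := by
    rw [← Measure.map_neg_eq_self (volume : Measure ℝ)]
    have m : MeasurableEmbedding fun x : ℝ => -x := (Homeomorph.neg ℝ).measurableEmbedding
    rw [MeasurableEmbedding.integrableOn_map_iff m]
    simp_rw [Function.comp_def, abs_neg, neg_preimage, neg_Iic, neg_zero]
    exact (integrableOn_Ici_iff_integrableOn_Ioi).mpr h1
  have h3 := h2.union h1
  rwa [Iic_union_Ioi, integrableOn_univ] at h3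

private lemma integrable_dens {c : ℝ} (hc : 0 < c) :
    Integrable (fun y : ℝ => c / 2 * Real.exp (-(c * |y|))) := by
  have := integrable_comp_abs' (f := fun t => c / 2 * Real.exp (-(c * t)))
    (by continuity) ((exp_neg_int 0 hc).const_mul (c / 2))
  simpa using this

private lemma integral_dens {c : ℝ} (hc : 0 < c) :
    ∫ y : ℝ, c / 2 * Real.exp (-(c * |y|)) = 1 := by
  have h1 : (∫ y : ℝ, c / 2 * Real.exp (-(c * |y|)))
      = 2 * ∫ t in Ioi (0:ℝ), c / 2 * Real.exp (-(c * t)) :=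
    integral_comp_abs (f := fun t => c / 2 * Real.exp (-(c * t)))
  rw [h1, MeasureTheory.integral_const_mul, exp_neg_intval 0 hc]
  simp [Real.exp_zero]
  field_simp

private lemma shift_setIntegral (g : ℝ → ℝ) (a : ℝ) :
    ∫ t in Ioi (0:ℝ), g (t + a) = ∫ s in Ioi a, g s := by
  have A : MeasurableEmbedding fun x : ℝ => x + a :=
    (Homeomorph.addRight a).isClosedEmbedding.measurableEmbedding
  have B := MeasurableEmbedding.setIntegral_map (μ := volume) A g (Ioi a)
  rw [map_add_right_eq_self volume a] at B
  have hpre : (fun x : ℝ => x + a) ⁻¹' (Ioi a) = Ioi 0 := by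
    ext x; simp
  rw [hpre] at B
  exact B.symm

private lemma shift_integrableOn {g : ℝ → ℝ} {a : ℝ} (hg : IntegrableOn g (Ioi a)) :
    IntegrableOn (fun t => g (t + a)) (Ioi (0:ℝ)) := by
  have A : MeasurableEmbedding fun x : ℝ => x + a :=
    (Homeomorph.addRight a).isClosedEmbedding.measurableEmbedding
  have B := (MeasurableEmbedding.integrableOn_map_iff A (f := g) (s := Ioi a) (μ := volume))
  rw [map_add_right_eq_self volume a] at B
  have hpre : (fun x : ℝ => x + a) ⁻¹' (Ioi a) = Ioi 0 := by
    ext x; simp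
  rw [hpre] at B
  exact B.1 hg

private lemma m_cont {k : ℕ} (hk : 1 ≤ k) {h : ℝ → ℝ} (hh : Admissible h) (v : Fin k → ℝ) :
    Continuous fun r : ℝ => ⨅ i, h (|r - v i|) := by
  haveI : Nonempty (Fin k) := ⟨⟨0, hk⟩⟩
  have hcomp : ∀ i, Continuous fun r : ℝ => h (|r - v i|) := fun i =>
    ContinuousOn.comp_continuous hh.cont ((continuous_id.sub continuous_const).abs)
      (fun x => Set.mem_Ici.2 (abs_nonneg _))
  have heq : ∀ r : ℝ, (⨅ i, h (|r - v i|))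
      = Finset.univ.inf' Finset.univ_nonempty (fun i => h (|r - v i|)) :=
    fun r => (Finset.inf'_univ_eq_ciInf _).symm
  rw [continuous_iff_continuousAt]
  intro x
  have ht := Filter.Tendsto.finset_inf'_nhds_apply (s := (Finset.univ : Finset (Fin k)))
    Finset.univ_nonempty (f := fun i r => h (|r - v i|)) (g := fun i => h (|x - v i|))
    (l := 𝓝 x) (fun i _ => (hcomp i).tendsto x)
  have ht2 : Tendsto (fun r => ⨅ i, h (|r - v i|)) (𝓝 x)
      (𝓝 (Finset.univ.inf' Finset.univ_nonempty fun i => h (|x - v i|))) :=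
    Tendsto.congr (fun r => (heq r).symm) ht
  rw [← heq x] at ht2
  exact ht2

private lemma wf_cont {ε ζ : ℝ} : Continuous (wf ε ζ) := by
  unfold wf
  continuity

private lemma wf_upper2 {ε ζ : ℝ} (hζ : 0 < ζ) {T s : ℝ} (hT : 0 ≤ T) (hTs : T ≤ s) :
    wf ε ζ s ≤ wf ε ζ T * Real.exp (-((ε + ζ) * (s - T))) := by
  rw [wf_eq, wf_eq, mul_assoc, ← Real.exp_add]
  refine mul_le_mul_of_nonneg_left (Real.exp_le_exp.2 ?_) (by positivity)
  rw [abs_of_nonneg (hT.trans hTs), abs_of_nonneg hT]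
  nlinarith

private lemma wf_integrableOn {ε ζ : ℝ} (hζ : 0 < ζ) (hζε : ζ < ε) (c : ℝ) :
    IntegrableOn (wf ε ζ) (Ioi c) := by
  have hβ1 : (0:ℝ) < ε - ζ := by linarith
  refine Integrable.mono' ((exp_neg_int c hβ1).const_mul (ζ / 2))
    wf_cont.aestronglyMeasurable.restrict (ae_of_all _ fun s => ?_)
  rw [Real.norm_eq_abs, abs_of_pos (wf_pos hζ s), wf_eq]
  refine mul_le_mul_of_nonneg_left (Real.exp_le_exp.2 ?_) (by positivity)
  have h5 : ζ * (-|s|) ≤ ζ * s := mul_le_mul_of_nonneg_left (neg_abs_le s) hζ.le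
  nlinarith

private lemma wf_tail_lt {ε ζ : ℝ} (hζ : 0 < ζ) (hζε : ζ < ε) (a : ℝ) :
    (∫ s in Ioi a, wf ε ζ s) < wf ε ζ a / (ε - ζ) := by
  have hβ1 : (0:ℝ) < ε - ζ := by linarith
  have hβ2 : (0:ℝ) < ε + ζ := by linarith
  set T := |a| + 1 with hT
  have haT : a ≤ T := le_trans (le_abs_self a) (by simp [hT])
  have hT0 : (0:ℝ) ≤ T := by have := abs_nonneg a; simp [hT]; linarith
  have hwint : ∀ c : ℝ, IntegrableOn (wf ε ζ) (Ioi c) := wf_integrableOn hζ hζε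
  have hsplit : ∫ s in Ioi a, wf ε ζ s
      = (∫ s in Ioc a T, wf ε ζ s) + ∫ s in Ioi T, wf ε ζ s := by
    rw [← setIntegral_union (Ioc_disjoint_Ioi le_rfl) measurableSet_Ioi
      ((hwint a).mono_set Ioc_subset_Ioi_self) (hwint T), Ioc_union_Ioi_eq_Ioi haT]
  have hb1 : (∫ s in Ioc a T, wf ε ζ s)
      ≤ wf ε ζ a / (ε - ζ) * (1 - Real.exp (-((ε - ζ) * (T - a)))) := by
    have hint2 : IntegrableOn (fun s => wf ε ζ a * Real.exp (-((ε - ζ) * (s - a)))) (Ioc a T) :=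
      (Continuous.integrableOn_Icc (by continuity)).mono_set Ioc_subset_Icc_self
    have hmon := setIntegral_mono_on ((hwint a).mono_set Ioc_subset_Ioi_self) hint2
      measurableSet_Ioc (fun s hs => wf_est hζ hs.1.le)
    refine le_trans hmon (le_of_eq ?_)
    rw [← intervalIntegral.integral_of_le haT]
    have hder : ∀ s ∈ uIcc a T, HasDerivAt
        (fun x => -(wf ε ζ a / (ε - ζ)) * Real.exp (-((ε - ζ) * (x - a))))
        (wf ε ζ a * Real.exp (-((ε - ζ) * (s - a)))) s := by
      intro s _
      have h1 : HasDerivAt (fun x : ℝ => -((ε - ζ) * (x - a))) (-(ε - ζ)) s := by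
        have := (((hasDerivAt_id s).sub_const a).const_mul (ε - ζ)).neg; simp only [mul_one] at this; exact this
      have h2 := (h1.exp.const_mul (-(wf ε ζ a / (ε - ζ))))
      refine h2.congr_deriv ?_
      field_simp
    rw [intervalIntegral.integral_eq_sub_of_hasDerivAt hder
      (Continuous.intervalIntegrable (by continuity) _ _)]

    field_simp
    simp only [sub_self, mul_zero, neg_zero, Real.exp_zero]
    ring
  have hb2 : (∫ s in Ioi T, wf ε ζ s) ≤ wf ε ζ T / (ε + ζ) := by
    have hfeq : (fun s : ℝ => wf ε ζ T * Real.exp (-((ε + ζ) * (s - T))))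
        = fun s => (wf ε ζ T * Real.exp ((ε + ζ) * T)) * Real.exp (-((ε + ζ) * s)) := by
      funext s
      rw [mul_assoc, ← Real.exp_add]
      congr 2
      ring
    have hri : IntegrableOn (fun s => wf ε ζ T * Real.exp (-((ε + ζ) * (s - T)))) (Ioi T) := by
      rw [hfeq]; exact (exp_neg_int T hβ2).const_mul _
    have hmon := setIntegral_mono_on (hwint T) hri measurableSet_Ioi
      (fun s hs => wf_upper2 hζ hT0 (le_of_lt hs))
    refine le_trans hmon (le_of_eq ?_)
    rw [hfeq, MeasureTheory.integral_const_mul, exp_neg_intval T hβ2, Real.exp_neg]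
    field_simp
  have hwTq : wf ε ζ T ≤ wf ε ζ a * Real.exp (-((ε - ζ) * (T - a))) := wf_est hζ haT
  have hlt : wf ε ζ T / (ε + ζ) < wf ε ζ T / (ε - ζ) := by
    apply div_lt_div_of_pos_left (wf_pos hζ T) hβ1 (by linarith)
  have h6 : wf ε ζ T / (ε - ζ) ≤ wf ε ζ a * Real.exp (-((ε - ζ) * (T - a))) / (ε - ζ) := by
    gcongr
  have h7 : wf ε ζ a / (ε - ζ) * (1 - Real.exp (-((ε - ζ) * (T - a))))
      + wf ε ζ a * Real.exp (-((ε - ζ) * (T - a))) / (ε - ζ) = wf ε ζ a / (ε - ζ) := by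
    ring
  linarith [hsplit, hb1, hb2, hlt, h6]

section Core

variable {ε ζ lamhat : ℝ} {k : ℕ} {h : ℝ → ℝ} {v : Fin k → ℝ}

private lemma m_nonneg (hk : 1 ≤ k) (hh : Admissible h) (r : ℝ) :
    0 ≤ ⨅ i, h (|r - v i|) := by
  haveI : Nonempty (Fin k) := ⟨⟨0, hk⟩⟩
  exact le_ciInf fun i => hh.nonneg _ (abs_nonneg _)

private lemma fhat_bdd (hk : 1 ≤ k) (hh : Admissible h) {c : ℝ} (hc : 0 ≤ c) :
    BddBelow (Set.range fun b : Fin k → ℝ =>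
      ∫ y : ℝ, (⨅ i, h (|y - b i|)) * (c / 2 * Real.exp (-(c * |y|)))) := by
  refine ⟨0, ?_⟩
  rintro x ⟨b, rfl⟩
  refine integral_nonneg fun y => mul_nonneg (m_nonneg hk hh y) ?_
  have := Real.exp_pos (-(c * |y|))
  nlinarith

private lemma fhat_le (hk : 1 ≤ k) (hh : Admissible h) {c : ℝ} (hc : 0 ≤ c) (b : Fin k → ℝ) :
    fhat c k h ≤ ∫ y : ℝ, (⨅ i, h (|y - b i|)) * (c / 2 * Real.exp (-(c * |y|))) := by
  rw [fhat]
  exact ciInf_le (fhat_bdd hk hh hc) b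

private lemma lam_lt_fhat (hζ : 0 < ζ) (hζε : ζ < ε) (hlam : 0 < lamhat)
    (hlam' : lamhat ≤ (ε - ζ) / (ε + ζ) * fhat (ε + ζ) k h) :
    lamhat < fhat (ε + ζ) k h := by
  have hc : 0 < (ε - ζ) / (ε + ζ) := div_pos (by linarith) (by linarith)
  have hc1 : (ε - ζ) / (ε + ζ) < 1 := by
    rw [div_lt_one (by linarith)]; linarith
  have hfh : 0 < fhat (ε + ζ) k h := by
    by_contra hfh
    push_neg at hfh
    nlinarith [mul_nonpos_of_nonneg_of_nonpos hc.le hfh]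
  nlinarith

private lemma wf_le_dens' (hζ : 0 < ζ) (hζε : ζ < ε) {a s : ℝ} (has : a ≤ s) :
    wf ε ζ s ≤ (ζ / (ε + ζ) * Real.exp (2 * ε * |a|))
      * ((ε + ζ) / 2 * Real.exp (-((ε + ζ) * |s|))) := by
  have hβ2 : (0:ℝ) < ε + ζ := by linarith
  have heq : (ζ / (ε + ζ) * Real.exp (2 * ε * |a|)) * ((ε + ζ) / 2 * Real.exp (-((ε + ζ) * |s|)))
      = ζ / 2 * Real.exp (2 * ε * |a| + -((ε + ζ) * |s|)) := by
    rw [Real.exp_add]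
    field_simp
  rw [heq, wf_eq]
  refine mul_le_mul_of_nonneg_left (Real.exp_le_exp.2 ?_) (by positivity)
  have h1 : |s| - s ≤ 2 * |a| := by
    rcases le_or_gt 0 s with hs | hs
    · rw [abs_of_nonneg hs]; have := abs_nonneg a; linarith
    · rw [abs_of_neg hs]
      have := neg_abs_le a
      linarith
  nlinarith [hζε.le, abs_nonneg s]

private lemma exp_le_dens' {c a s : ℝ} (hc : 0 < c) (has : a ≤ s) :
    Real.exp (-(c * (s - a))) ≤ (2 / c * Real.exp (c * a + 2 * c * |a|))
      * (c / 2 * Real.exp (-(c * |s|))) := by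
  have heq : (2 / c * Real.exp (c * a + 2 * c * |a|)) * (c / 2 * Real.exp (-(c * |s|)))
      = Real.exp ((c * a + 2 * c * |a|) + -(c * |s|)) := by
    rw [Real.exp_add (c * a + 2 * c * |a|) (-(c * |s|)), Real.exp_add (c * a) (2 * c * |a|)]
    field_simp
  rw [heq]
  refine Real.exp_le_exp.2 ?_
  have h1 : |s| - s ≤ 2 * |a| := by
    rcases le_or_gt 0 s with hs | hs
    · rw [abs_of_nonneg hs]; have := abs_nonneg a; linarith
    · rw [abs_of_neg hs]
      have := neg_abs_le a
      linarith
  nlinarith [hc.le]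

private lemma mwf_integrableOn (hζ : 0 < ζ) (hζε : ζ < ε) (hk : 1 ≤ k) (hh : Admissible h)
    (HI : Integrable fun y : ℝ =>
      (⨅ i, h (|y - v i|)) * ((ε + ζ) / 2 * Real.exp (-((ε + ζ) * |y|)))) (a : ℝ) :
    IntegrableOn (fun s => (⨅ i, h (|s - v i|)) * wf ε ζ s) (Ioi a) := by
  refine Integrable.mono' ((HI.const_mul (ζ / (ε + ζ) * Real.exp (2 * ε * |a|))).integrableOn)
    (((m_cont hk hh v).mul wf_cont).aestronglyMeasurable.restrict) ?_
  refine (ae_restrict_iff' measurableSet_Ioi).2 (ae_of_all _ fun s hs => ?_)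
  rw [Real.norm_eq_abs, abs_of_nonneg (mul_nonneg (m_nonneg hk hh s) (wf_pos hζ s).le)]
  calc (⨅ i, h (|s - v i|)) * wf ε ζ s
      ≤ (⨅ i, h (|s - v i|)) * ((ζ / (ε + ζ) * Real.exp (2 * ε * |a|))
        * ((ε + ζ) / 2 * Real.exp (-((ε + ζ) * |s|)))) :=
        mul_le_mul_of_nonneg_left (wf_le_dens' hζ hζε (le_of_lt hs)) (m_nonneg hk hh s)
    _ = ζ / (ε + ζ) * Real.exp (2 * ε * |a|)
        * ((⨅ i, h (|s - v i|)) * ((ε + ζ) / 2 * Real.exp (-((ε + ζ) * |s|)))) := by ring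

private lemma mexp_integrableOn (hζ : 0 < ζ) (hζε : ζ < ε) (hk : 1 ≤ k) (hh : Admissible h)
    (HI : Integrable fun y : ℝ =>
      (⨅ i, h (|y - v i|)) * ((ε + ζ) / 2 * Real.exp (-((ε + ζ) * |y|)))) (a : ℝ) :
    IntegrableOn (fun s => (⨅ i, h (|s - v i|)) * Real.exp (-((ε + ζ) * (s - a)))) (Ioi a) := by
  have hβ2 : (0:ℝ) < ε + ζ := by linarith
  refine Integrable.mono'
    ((HI.const_mul (2 / (ε + ζ) * Real.exp ((ε + ζ) * a + 2 * (ε + ζ) * |a|))).integrableOn)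
    (((m_cont hk hh v).mul (by continuity)).aestronglyMeasurable.restrict) ?_
  refine (ae_restrict_iff' measurableSet_Ioi).2 (ae_of_all _ fun s hs => ?_)
  rw [Real.norm_eq_abs, abs_of_nonneg (mul_nonneg (m_nonneg hk hh s) (Real.exp_pos _).le)]
  calc (⨅ i, h (|s - v i|)) * Real.exp (-((ε + ζ) * (s - a)))
      ≤ (⨅ i, h (|s - v i|)) * ((2 / (ε + ζ) * Real.exp ((ε + ζ) * a + 2 * (ε + ζ) * |a|))
        * ((ε + ζ) / 2 * Real.exp (-((ε + ζ) * |s|)))) :=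
        mul_le_mul_of_nonneg_left (exp_le_dens' hβ2 (le_of_lt hs)) (m_nonneg hk hh s)
    _ = 2 / (ε + ζ) * Real.exp ((ε + ζ) * a + 2 * (ε + ζ) * |a|)
        * ((⨅ i, h (|s - v i|)) * ((ε + ζ) / 2 * Real.exp (-((ε + ζ) * |s|)))) := by ring


set_option maxHeartbeats 2000000 in
private lemma lemmaR (hζ : 0 < ζ) (hζε : ζ < ε) (hk : 1 ≤ k) (hh : Admissible h)
    (hlam : 0 < lamhat) (hlam' : lamhat ≤ (ε - ζ) / (ε + ζ) * fhat (ε + ζ) k h)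
    (HI : Integrable fun y : ℝ =>
      (⨅ i, h (|y - v i|)) * ((ε + ζ) / 2 * Real.exp (-((ε + ζ) * |y|))))
    {a : ℝ} (ha : median v ≤ a) :
    lamhat * (∫ s in Ioi a, wf ε ζ s) < ∫ s in Ioi a, (⨅ i, h (|s - v i|)) * wf ε ζ s := by
  haveI : Nonempty (Fin k) := ⟨⟨0, hk⟩⟩
  have hβ1 : (0:ℝ) < ε - ζ := by linarith
  have hβ2 : (0:ℝ) < ε + ζ := by linarith
  have hfh : 0 < fhat (ε + ζ) k h := by
    have hc : 0 < (ε - ζ) / (ε + ζ) := div_pos hβ1 hβ2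
    by_contra hfh
    push_neg at hfh
    nlinarith [mul_nonpos_of_nonneg_of_nonpos hc.le hfh]
  -- shifted integrability
  have hIOn1 := mwf_integrableOn hζ hζε hk hh HI a
  have hIOn2 := mexp_integrableOn hζ hζε hk hh HI a
  have hshift2 : IntegrableOn
      (fun t => (⨅ i, h (|t + a - v i|)) * Real.exp (-((ε + ζ) * t))) (Ioi (0:ℝ)) := by
    have := shift_integrableOn
      (g := fun s => (⨅ i, h (|s - v i|)) * Real.exp (-((ε + ζ) * (s - a)))) (a := a) hIOn2
    refine this.congr_fun (fun t _ => ?_) measurableSet_Ioi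
    simp
  have hshift1 : IntegrableOn
      (fun t => (⨅ i, h (|t + a - v i|)) * wf ε ζ (t + a)) (Ioi (0:ℝ)) := by
    have := shift_integrableOn
      (g := fun s => (⨅ i, h (|s - v i|)) * wf ε ζ s) (a := a) hIOn1
    exact this
  -- the comparison function F
  set F : ℝ → ℝ := fun t => (⨅ i, h (|t + a - v i|)) * ((ε + ζ) / 2 * Real.exp (-((ε + ζ) * t)))
    with hF
  have hFeq : F = fun t => (ε + ζ) / 2 * ((⨅ i, h (|t + a - v i|)) * Real.exp (-((ε + ζ) * t))) := by
    funext t; rw [hF]; ring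
  have hFint : IntegrableOn F (Ioi (0:ℝ)) := by
    rw [hFeq]; exact hshift2.const_mul _
  have hFcont : Continuous fun y : ℝ => F |y| := by
    rw [hFeq]
    have h1 : Continuous fun y : ℝ => ⨅ i, h (|(|y| + a) - v i|) :=
      (m_cont hk hh v).comp (continuous_abs.add continuous_const)
    have h2 : Continuous fun y : ℝ => ⨅ i, h (|(|y|) + a - v i|) := h1
    continuity
  have hFabs : Integrable fun y : ℝ => F |y| := integrable_comp_abs' hFcont hFint
  -- step: fhat ≤ ∫ F |y|
  obtain ⟨b, hb⟩ := median_config hk h hh v ha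
  have hstep4 : fhat (ε + ζ) k h ≤ ∫ y : ℝ, F |y| := by
    refine le_trans (fhat_le hk hh hβ2.le b) ?_
    refine integral_mono_of_nonneg (ae_of_all _ fun y => ?_) hFabs (ae_of_all _ fun y => ?_)
    · refine mul_nonneg (m_nonneg hk hh y) ?_
      have := Real.exp_pos (-((ε + ζ) * |y|))
      nlinarith
    · have h3 : (⨅ i, h (|y - b i|)) ≤ ⨅ j, h (|(|y|) + a - v j|) := by
      
        refine le_trans (hb y) (le_of_eq (iInf_congr fun j => ?_))
        rw [show a + |y| - v j = |y| + a - v j from by ring]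
      have h4 : (0:ℝ) ≤ (ε + ζ) / 2 * Real.exp (-((ε + ζ) * |y|)) := by positivity
      calc (⨅ i, h (|y - b i|)) * ((ε + ζ) / 2 * Real.exp (-((ε + ζ) * |y|)))
          ≤ (⨅ j, h (|(|y|) + a - v j|)) * ((ε + ζ) / 2 * Real.exp (-((ε + ζ) * |y|))) :=
            mul_le_mul_of_nonneg_right h3 h4
        _ = F |y| := rfl
  have hstep6 : (∫ y : ℝ, F |y|) = 2 * ∫ t in Ioi (0:ℝ), F t := integral_comp_abs
  have hstep7 : (∫ t in Ioi (0:ℝ), F t)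
      = (ε + ζ) / 2 * ∫ t in Ioi (0:ℝ), (⨅ i, h (|t + a - v i|)) * Real.exp (-((ε + ζ) * t)) := by
    rw [hFeq, MeasureTheory.integral_const_mul]
  -- step8 : multiply by wf a and compare with shifted integral
  have hstep8 : wf ε ζ a * ∫ t in Ioi (0:ℝ), (⨅ i, h (|t + a - v i|)) * Real.exp (-((ε + ζ) * t))
      ≤ ∫ t in Ioi (0:ℝ), (⨅ i, h (|t + a - v i|)) * wf ε ζ (t + a) := by
    rw [← MeasureTheory.integral_const_mul]
    refine setIntegral_mono_on (hshift2.const_mul _) hshift1 measurableSet_Ioi fun t ht => ?_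
    have h5 : wf ε ζ a * Real.exp (-((ε + ζ) * t)) ≤ wf ε ζ (a + t) := wf_lower hζ (le_of_lt ht)
    rw [show a + t = t + a from by ring] at h5
    calc wf ε ζ a * ((⨅ i, h (|t + a - v i|)) * Real.exp (-((ε + ζ) * t)))
        = (⨅ i, h (|t + a - v i|)) * (wf ε ζ a * Real.exp (-((ε + ζ) * t))) := by ring
      _ ≤ (⨅ i, h (|t + a - v i|)) * wf ε ζ (t + a) :=
          mul_le_mul_of_nonneg_left h5 (m_nonneg hk hh _)
  have hstep9 : (∫ t in Ioi (0:ℝ), (⨅ i, h (|t + a - v i|)) * wf ε ζ (t + a))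
      = ∫ s in Ioi a, (⨅ i, h (|s - v i|)) * wf ε ζ s :=
    shift_setIntegral (fun s => (⨅ i, h (|s - v i|)) * wf ε ζ s) a
  -- main chain
  set W := ∫ s in Ioi a, wf ε ζ s with hW
  have hW0 : 0 ≤ W := setIntegral_nonneg measurableSet_Ioi fun s _ => (wf_pos hζ s).le
  have hchain1 : lamhat * W ≤ ((ε - ζ) / (ε + ζ) * fhat (ε + ζ) k h) * W :=
    mul_le_mul_of_nonneg_right hlam' hW0
  have hchain2 : ((ε - ζ) / (ε + ζ) * fhat (ε + ζ) k h) * W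
      < ((ε - ζ) / (ε + ζ) * fhat (ε + ζ) k h) * (wf ε ζ a / (ε - ζ)) := by
    refine mul_lt_mul_of_pos_left (wf_tail_lt hζ hζε a) ?_
    have hc : 0 < (ε - ζ) / (ε + ζ) := div_pos hβ1 hβ2
    positivity
  have hchain3 : ((ε - ζ) / (ε + ζ) * fhat (ε + ζ) k h) * (wf ε ζ a / (ε - ζ))
      = fhat (ε + ζ) k h * wf ε ζ a / (ε + ζ) := by
    field_simp
  have hwa : 0 < wf ε ζ a := wf_pos hζ a
  have hchain4 : fhat (ε + ζ) k h * wf ε ζ a / (ε + ζ) ≤ (∫ y : ℝ, F |y|) * wf ε ζ a / (ε + ζ) := by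
    gcongr
  have hchain5 : (∫ y : ℝ, F |y|) * wf ε ζ a / (ε + ζ)
      = wf ε ζ a * ∫ t in Ioi (0:ℝ), (⨅ i, h (|t + a - v i|)) * Real.exp (-((ε + ζ) * t)) := by
    rw [hstep6, hstep7]
    field_simp
  calc lamhat * W ≤ ((ε - ζ) / (ε + ζ) * fhat (ε + ζ) k h) * W := hchain1
    _ < ((ε - ζ) / (ε + ζ) * fhat (ε + ζ) k h) * (wf ε ζ a / (ε - ζ)) := hchain2
    _ = fhat (ε + ζ) k h * wf ε ζ a / (ε + ζ) := hchain3
    _ ≤ (∫ y : ℝ, F |y|) * wf ε ζ a / (ε + ζ) := hchain4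
    _ = wf ε ζ a * ∫ t in Ioi (0:ℝ), (⨅ i, h (|t + a - v i|)) * Real.exp (-((ε + ζ) * t)) :=
        hchain5
    _ ≤ ∫ t in Ioi (0:ℝ), (⨅ i, h (|t + a - v i|)) * wf ε ζ (t + a) := hstep8
    _ = ∫ s in Ioi a, (⨅ i, h (|s - v i|)) * wf ε ζ s := hstep9

private lemma D1 (hk : 1 ≤ k) (hh : Admissible h) {ν : ℝ → ℝ}
    (hODE : ∀ r : ℝ, HasDerivAt ν
      ((⨅ i, h (|r - v i|)) * ((ζ / 2) * Real.exp (-(ζ * |r|)))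
        - lamhat * ((ζ / 2) * Real.exp (-(ζ * |r|))) - ε * |ν r|) r)
    {a r : ℝ} (har : a ≤ r) (hneg : ∀ s ∈ Icc a r, ν s ≤ 0) :
    (∫ s in a..r, ((⨅ i, h (|s - v i|)) - lamhat) * wf ε ζ s)
      = ν r * Real.exp (-(ε * r)) - ν a * Real.exp (-(ε * a)) := by
  refine intervalIntegral.integral_eq_sub_of_hasDerivAt
    (f := fun x => ν x * Real.exp (-(ε * x))) (fun s hs => ?_) ?_
  · rw [uIcc_of_le har] at hs
    have h1 : HasDerivAt (fun x : ℝ => -(ε * x)) (-ε) s := by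
      have := ((hasDerivAt_id s).const_mul ε).neg; simp only [mul_one] at this; exact this
    have h2 := (hODE s).mul h1.exp
    refine h2.congr_deriv ?_
    rw [abs_of_nonpos (hneg s hs)]
    unfold wf
    ring
  · exact Continuous.intervalIntegrable (((m_cont hk hh v).sub continuous_const).mul wf_cont) _ _

private lemma E1 (hζ : 0 < ζ) (hk : 1 ≤ k) (hh : Admissible h) {ν : ℝ → ℝ}
    (hODE : ∀ r : ℝ, HasDerivAt ν
      ((⨅ i, h (|r - v i|)) * ((ζ / 2) * Real.exp (-(ζ * |r|)))
        - lamhat * ((ζ / 2) * Real.exp (-(ζ * |r|))) - ε * |ν r|) r)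
    {R₀ r₀ : ℝ} (hR₀ : ∀ s, R₀ ≤ s → lamhat ≤ ⨅ i, h (|s - v i|))
    (hr₀ : R₀ ≤ r₀) (hν : 0 ≤ ν r₀) : ∀ r, r₀ ≤ r → 0 ≤ ν r := by
  intro r hr
  by_contra hneg
  push_neg at hneg
  have hcont : Continuous ν := continuous_iff_continuousAt.2 fun x => (hODE x).continuousAt
  have hr₀r : r₀ < r := lt_of_le_of_ne hr (fun he => by rw [← he] at hneg; linarith)
  set S := Icc r₀ r ∩ {s | 0 ≤ ν s} with hS
  have hSne : S.Nonempty := ⟨r₀, ⟨le_rfl, hr₀r.le⟩, hν⟩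
  have hSb : BddAbove S := BddAbove.mono inter_subset_left bddAbove_Icc
  have hSc : IsClosed S := isClosed_Icc.inter (isClosed_le continuous_const hcont)
  have hcS := hSc.csSup_mem hSne hSb
  set c := sSup S with hc
  obtain ⟨⟨hc1, hc2⟩, hc3⟩ := hcS
  rw [mem_setOf_eq] at hc3
  have hcr : c < r := lt_of_le_of_ne hc2 (fun he => by rw [he] at hc3; linarith)
  have hlt : ∀ s, c < s → s ≤ r → ν s < 0 := by
    intro s hcs hsr
    by_contra hns
    push_neg at hns
    have hmem : s ∈ S := ⟨⟨by linarith, hsr⟩, hns⟩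
    exact absurd (le_csSup hSb hmem) (not_le.2 hcs)
  have hc0 : ν c = 0 := by
    refine le_antisymm ?_ hc3
    have htd : Tendsto ν (𝓝[>] c) (𝓝 (ν c)) := (hcont.tendsto c).mono_left nhdsWithin_le_nhds
    refine le_of_tendsto htd ?_
    filter_upwards [Ioc_mem_nhdsGT_of_mem ⟨le_rfl, hcr⟩] with s hs
    exact (hlt s hs.1 hs.2).le
  have hneg' : ∀ s ∈ Icc c r, ν s ≤ 0 := by
    intro s hs
    rcases eq_or_lt_of_le hs.1 with he | hl
    · exact he ▸ hc0.le
    · exact (hlt s hl hs.2).le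
  have hD := D1 hk hh hODE hcr.le hneg'
  have hint : 0 ≤ ∫ s in c..r, ((⨅ i, h (|s - v i|)) - lamhat) * wf ε ζ s := by
    refine intervalIntegral.integral_nonneg hcr.le fun s hs => ?_
    exact mul_nonneg (sub_nonneg.2 (hR₀ s (by linarith [hs.1]))) (wf_pos hζ s).le
  rw [hD, hc0, zero_mul, sub_zero] at hint
  nlinarith [Real.exp_pos (-(ε * r))]

private lemma coreRight (hζ : 0 < ζ) (hζε : ζ < ε) (hk : 1 ≤ k) (hh : Admissible h)
    (hlam : 0 < lamhat) (hlam' : lamhat ≤ (ε - ζ) / (ε + ζ) * fhat (ε + ζ) k h)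
    {ν : ℝ → ℝ} (hsol : IsSolution ε ζ lamhat h v ν)
    (HI : Integrable fun y : ℝ =>
      (⨅ i, h (|y - v i|)) * ((ε + ζ) / 2 * Real.exp (-((ε + ζ) * |y|)))) :
    ∃ U : ℝ, ∀ r, U ≤ r → 0 ≤ ν r := by
  haveI : Nonempty (Fin k) := ⟨⟨0, hk⟩⟩
  obtain ⟨hmed0, hODE⟩ := hsol
  have hβ2 : (0:ℝ) < ε + ζ := by linarith
  have hlamfh := lam_lt_fhat hζ hζε hlam hlam'
  -- there is a point where h exceeds lamhat
  have hx : ∃ x : ℝ, 0 ≤ x ∧ lamhat < h x := by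
    by_contra hcon
    push_neg at hcon
    have h1 := fhat_le hk hh hβ2.le (fun _ => (0:ℝ))
    have h2 : (∫ y : ℝ, (⨅ i : Fin k, h (|y - (fun _ => (0:ℝ)) i|))
          * ((ε + ζ) / 2 * Real.exp (-((ε + ζ) * |y|))))
        = ∫ y : ℝ, h (|y|) * ((ε + ζ) / 2 * Real.exp (-((ε + ζ) * |y|))) := by
      congr 1
      funext y
      congr 1
      simp only [sub_zero, ciInf_const]
    have h3 : (∫ y : ℝ, h (|y|) * ((ε + ζ) / 2 * Real.exp (-((ε + ζ) * |y|))))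
        ≤ ∫ y : ℝ, lamhat * ((ε + ζ) / 2 * Real.exp (-((ε + ζ) * |y|))) := by
      refine integral_mono_of_nonneg (ae_of_all _ fun y => ?_)
        ((integrable_dens hβ2).const_mul lamhat) (ae_of_all _ fun y => ?_)
      · exact mul_nonneg (hh.nonneg _ (abs_nonneg _)) (by positivity)
      · exact mul_le_mul_of_nonneg_right (hcon _ (abs_nonneg y)) (by positivity)
    have h4 : (∫ y : ℝ, lamhat * ((ε + ζ) / 2 * Real.exp (-((ε + ζ) * |y|)))) = lamhat := by
      rw [MeasureTheory.integral_const_mul, integral_dens hβ2, mul_one]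
    rw [h2] at h1
    rw [h4] at h3
    linarith
  obtain ⟨x₀, hx₀, hx₀'⟩ := hx
  set maxv := Finset.univ.sup' Finset.univ_nonempty v with hmaxv
  set R₀ := max (maxv + x₀) (median v) with hR₀def
  have hR₀ : ∀ s, R₀ ≤ s → lamhat ≤ ⨅ i, h (|s - v i|) := by
    intro s hsR
    refine le_ciInf fun i => ?_
    have h5 : v i ≤ maxv := Finset.le_sup' v (Finset.mem_univ i)
    have h6 : x₀ ≤ s - v i := by
      have := le_trans (le_max_left (maxv + x₀) (median v)) hsR
      linarith
    rw [abs_of_nonneg (by linarith)]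
    exact le_trans hx₀'.le (hh.mono.monotoneOn hx₀ (by simp; linarith) h6)
  by_cases hex : ∃ r₀, R₀ ≤ r₀ ∧ 0 ≤ ν r₀
  · obtain ⟨r₀, h1, h2⟩ := hex
    exact ⟨r₀, fun r hr => E1 hζ hk hh hODE hR₀ h1 h2 r hr⟩
  exfalso
  push_neg at hex
  have hmedR : median v ≤ R₀ := le_max_right _ _
  have hcont : Continuous ν := continuous_iff_continuousAt.2 fun x => (hODE x).continuousAt
  set S := Icc (median v) R₀ ∩ {s | 0 ≤ ν s} with hS
  have hSne : S.Nonempty := ⟨median v, ⟨le_rfl, hmedR⟩, by rw [mem_setOf_eq, hmed0]⟩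
  have hSb : BddAbove S := BddAbove.mono inter_subset_left bddAbove_Icc
  have hSc : IsClosed S := isClosed_Icc.inter (isClosed_le continuous_const hcont)
  have hcS := hSc.csSup_mem hSne hSb
  set c := sSup S with hc
  obtain ⟨⟨hc1, hc2⟩, hc3⟩ := hcS
  rw [mem_setOf_eq] at hc3
  have hcR : c < R₀ := by
    refine lt_of_le_of_ne hc2 (fun he => ?_)
    have := hex R₀ le_rfl
    rw [he] at hc3
    linarith
  have hlt : ∀ s, c < s → ν s < 0 := by
    intro s hcs
    rcases le_or_gt s R₀ with hsR | hsR
    · by_contra hns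
      push_neg at hns
      have hmem : s ∈ S := ⟨⟨by linarith, hsR⟩, hns⟩
      exact absurd (le_csSup hSb hmem) (not_le.2 hcs)
    · exact hex s hsR.le
  have hc0 : ν c = 0 := by
    refine le_antisymm ?_ hc3
    have htd : Tendsto ν (𝓝[>] c) (𝓝 (ν c)) := (hcont.tendsto c).mono_left nhdsWithin_le_nhds
    refine le_of_tendsto htd ?_
    filter_upwards [Ioo_mem_nhdsGT_of_mem ⟨le_rfl, lt_add_one c⟩] with s hs
    exact (hlt s hs.1).le
  have hIOn1 := mwf_integrableOn hζ hζε hk hh HI c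
  have hwint := wf_integrableOn hζ hζε c
  have hW : ∀ r, c ≤ r → (∫ s in c..r, (⨅ i, h (|s - v i|)) * wf ε ζ s)
      ≤ lamhat * ∫ s in Ioi c, wf ε ζ s := by
    intro r hcr2
    have hneg' : ∀ s ∈ Icc c r, ν s ≤ 0 := by
      intro s hs
      rcases eq_or_lt_of_le hs.1 with he | hl
      · exact he ▸ hc0.le
      · exact (hlt s hl).le
    have hD := D1 hk hh hODE hcr2 hneg'
    have hνr : ν r * Real.exp (-(ε * r)) ≤ 0 := by
      rcases eq_or_lt_of_le hcr2 with he | hl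
      · rw [← he, hc0]; simp
      · exact mul_nonpos_of_nonpos_of_nonneg (hlt r hl).le (Real.exp_pos _).le
    have h8 : (∫ s in c..r, ((⨅ i, h (|s - v i|)) - lamhat) * wf ε ζ s) ≤ 0 := by
      rw [hD, hc0, zero_mul, sub_zero]
      exact hνr
    have h9 : (∫ s in c..r, ((⨅ i, h (|s - v i|)) - lamhat) * wf ε ζ s)
        = (∫ s in c..r, (⨅ i, h (|s - v i|)) * wf ε ζ s)
          - lamhat * ∫ s in c..r, wf ε ζ s := by
      have e1 : ∀ s : ℝ, ((⨅ i, h (|s - v i|)) - lamhat) * wf ε ζ s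
          = (⨅ i, h (|s - v i|)) * wf ε ζ s - lamhat * wf ε ζ s := fun s => by ring
      simp_rw [e1]
      rw [intervalIntegral.integral_sub (f := fun s => (⨅ i, h (|s - v i|)) * wf ε ζ s)
        (g := fun s => lamhat * wf ε ζ s)
        (Continuous.intervalIntegrable ((m_cont hk hh v).mul wf_cont) _ _)
        (Continuous.intervalIntegrable (continuous_const.mul wf_cont) _ _),
        intervalIntegral.integral_const_mul]
    have h10 : (∫ s in c..r, wf ε ζ s) ≤ ∫ s in Ioi c, wf ε ζ s := by
      rw [intervalIntegral.integral_of_le hcr2]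
      exact setIntegral_mono_set hwint (ae_of_all _ fun s => (wf_pos hζ s).le)
        (HasSubset.Subset.eventuallyLE Ioc_subset_Ioi_self)
    nlinarith [mul_le_mul_of_nonneg_left h10 hlam.le]
  have hRlt := lemmaR hζ hζε hk hh hlam hlam' HI hc1
  have htd := intervalIntegral_tendsto_integral_Ioi c hIOn1 tendsto_id
  have hev := (htd.eventually_const_lt hRlt).and (eventually_ge_atTop c)
  obtain ⟨r, hr1, hr2⟩ := hev.exists
  exact absurd (hW r hr2) (not_le.2 hr1)

/-- Any solution of the initial value problem is eventually nonnegative on the right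
and eventually nonpositive on the left. -/
theorem ivp_solution_sign (ε ζ lamhat : ℝ) (hζ : 0 < ζ) (hζε : ζ < ε)
    (k : ℕ) (hk : 1 ≤ k) (h : ℝ → ℝ) (hh : Admissible h)
    (hlam : 0 < lamhat)
    (hlam' : lamhat ≤ (ε - ζ) / (ε + ζ) * fhat (ε + ζ) k h) :
    ∀ (v : Fin k → ℝ) (ν : ℝ → ℝ), IsSolution ε ζ lamhat h v ν →
      ∃ U L : ℝ, (∀ r : ℝ, U ≤ r → 0 ≤ ν r) ∧ (∀ r : ℝ, r ≤ L → ν r ≤ 0) := by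
  intro v ν hsol
  haveI : Nonempty (Fin k) := ⟨⟨0, hk⟩⟩
  by_cases HI : Integrable fun y : ℝ =>
      (⨅ i, h (|y - v i|)) * ((ε + ζ) / 2 * Real.exp (-((ε + ζ) * |y|)))
  swap
  · exfalso
    have hβ2 : (0:ℝ) < ε + ζ := by linarith
    have h2 := fhat_le hk hh hβ2.le v
    rw [integral_undef HI] at h2
    have hc : 0 < (ε - ζ) / (ε + ζ) := div_pos (by linarith) (by linarith)
    nlinarith [mul_nonpos_of_nonneg_of_nonpos hc.le h2]
  obtain ⟨hmed0, hODE⟩ := hsol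
  obtain ⟨U, hU⟩ := coreRight hζ hζε hk hh hlam hlam' ⟨hmed0, hODE⟩ HI
  have hmedneg := median_neg hk v
  have hODE' : ∀ r : ℝ, HasDerivAt (fun x => -ν (-x))
      ((⨅ i, h (|r - (fun i => -v i) i|)) * ((ζ / 2) * Real.exp (-(ζ * |r|)))
        - lamhat * ((ζ / 2) * Real.exp (-(ζ * |r|))) - ε * |(fun x => -ν (-x)) r|) r := by
    intro r
    have hd := hODE (-r)
    have h1 : HasDerivAt (fun x : ℝ => -x) (-1 : ℝ) r := hasDerivAt_neg r
    have h2 := HasDerivAt.comp r hd h1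
    have h3 := h2.neg
    have e1 : (⨅ i, h (|r - -v i|)) = ⨅ i, h (|-r - v i|) := by
      refine iInf_congr fun i => ?_
      congr 1
      rw [sub_neg_eq_add, ← abs_neg]
      congr 1
      ring
    refine h3.congr_deriv ?_
    simp only [abs_neg]
    rw [e1]
    ring
  have hsol' : IsSolution ε ζ lamhat h (fun i => -v i) (fun x => -ν (-x)) := by
    refine ⟨?_, hODE'⟩
    show -ν (-(median fun i => -v i)) = 0
    rw [hmedneg, neg_neg, hmed0, neg_zero]
  have HI' : Integrable fun y : ℝ =>
      (⨅ i, h (|y - (fun i => -v i) i|)) * ((ε + ζ) / 2 * Real.exp (-((ε + ζ) * |y|))) := by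
    have hne : MeasurableEmbedding fun x : ℝ => -x := (Homeomorph.neg ℝ).measurableEmbedding
    have h4 : Integrable ((fun y : ℝ => (⨅ i, h (|y - v i|))
        * ((ε + ζ) / 2 * Real.exp (-((ε + ζ) * |y|)))) ∘ fun x : ℝ => -x) := by
      rw [← MeasurableEmbedding.integrable_map_iff hne]
      rwa [Measure.map_neg_eq_self (volume : Measure ℝ)]
    refine h4.congr (ae_of_all _ fun y => ?_)
    simp only [Function.comp_def]
    have e2 : (⨅ i, h (|-y - v i|)) = ⨅ i, h (|y - -v i|) := by
      refine iInf_congr fun i => ?_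
      congr 1
      rw [sub_neg_eq_add, ← abs_neg]
      congr 1
      ring
    rw [e2, abs_neg]
  obtain ⟨U', hU'⟩ := coreRight hζ hζε hk hh hlam hlam' hsol' HI'
  refine ⟨U, -U', hU, fun r hr => ?_⟩
  have h5 := hU' (-r) (by linarith)
  simp only [neg_neg] at h5
  linarith
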